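/- If a graph G has at least one edge, then h_f(G)/2 ≤ h'_f(G) ≤ h_f(G), where h_f is the fractional Hadwiger number and h'_f is the lower fractional Hadwiger number. -/

import Mathlib

open Finset

/-- Any two members of a bramble either share a vertex or are joined by an edge,
and each member induces a connected subgraph. -/
def IsBramble {V : Type} (G : SimpleGraph V) (B : Finset (Finset V)) : Prop :=
  (∀ A ∈ B, (G.induce (A : Set V)).Connected) ∧
    ∀ A ∈ B, ∀ A' ∈ B, (∃ v, v ∈ A ∧ v ∈ A') ∨ ∃ a ∈ A, ∃ b ∈ A', G.Adj a b

/-- A strong bramble: any two (possibly equal) members are joined by an edge. -/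
def IsStrongBramble {V : Type} (G : SimpleGraph V) (B : Finset (Finset V)) : Prop :=
  (∀ A ∈ B, (G.induce (A : Set V)).Connected) ∧
    ∀ A ∈ B, ∀ A' ∈ B, ∃ a ∈ A, ∃ b ∈ A', G.Adj a b

/-- A valid weighting: nonnegative weights whose total at every vertex is at most 1. -/
def IsValidWeight {V : Type} [DecidableEq V] (B : Finset (Finset V)) (w : Finset V → ℝ) : Prop :=
  (∀ A ∈ B, 0 ≤ w A) ∧ ∀ v : V, ∑ A ∈ B.filter (fun A => v ∈ A), w A ≤ 1

/-- The fractional Hadwiger number. -/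
noncomputable def fracHadwiger {V : Type} [Fintype V] [DecidableEq V] (G : SimpleGraph V) : ℝ :=
  sSup {h : ℝ | ∃ B : Finset (Finset V), ∃ w : Finset V → ℝ,
    IsBramble G B ∧ IsValidWeight B w ∧ h = ∑ A ∈ B, w A}

/-- The r-integral Hadwiger number: all weights multiples of 1/r. -/
noncomputable def rIntHadwiger {V : Type} [Fintype V] [DecidableEq V]
    (G : SimpleGraph V) (r : ℕ) : ℝ :=
  sSup {h : ℝ | ∃ B : Finset (Finset V), ∃ w : Finset V → ℝ,
    IsBramble G B ∧ IsValidWeight B w ∧ (∀ A ∈ B, ∃ k : ℕ, w A = k / r) ∧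
    h = ∑ A ∈ B, w A}

/-- The lower fractional Hadwiger number (using strong brambles). -/
noncomputable def lowerFracHadwiger {V : Type} [Fintype V] [DecidableEq V]
    (G : SimpleGraph V) : ℝ :=
  sSup {h : ℝ | ∃ B : Finset (Finset V), ∃ w : Finset V → ℝ,
    IsStrongBramble G B ∧ IsValidWeight B w ∧ h = ∑ A ∈ B, w A}

/-- The lower r-integral Hadwiger number. -/
noncomputable def lowerRIntHadwiger {V : Type} [Fintype V] [DecidableEq V]
    (G : SimpleGraph V) (r : ℕ) : ℝ :=
  sSup {h : ℝ | ∃ B : Finset (Finset V), ∃ w : Finset V → ℝ,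
    IsStrongBramble G B ∧ IsValidWeight B w ∧ (∀ A ∈ B, ∃ k : ℕ, w A = k / r) ∧
    h = ∑ A ∈ B, w A}

/-- `G` has a clique minor of order `t`. -/
def HasCliqueMinor {V : Type} (G : SimpleGraph V) (t : ℕ) : Prop :=
  ∃ f : Fin t → Finset V,
    (∀ i, (f i).Nonempty) ∧
    (∀ i, (G.induce ((f i : Set V))).Connected) ∧
    (∀ i j, i ≠ j → Disjoint (f i) (f j)) ∧
    (∀ i j, i ≠ j → ∃ a ∈ f i, ∃ b ∈ f j, G.Adj a b)

/-- `G` has a clique minor of order `t` and breadth at most `d` (each part has ≤ d vertices). -/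
def HasCliqueMinorBreadth {V : Type} (G : SimpleGraph V) (t : ℕ) (d : ℝ) : Prop :=
  ∃ f : Fin t → Finset V,
    (∀ i, (f i).Nonempty) ∧
    (∀ i, (G.induce ((f i : Set V))).Connected) ∧
    (∀ i j, i ≠ j → Disjoint (f i) (f j)) ∧
    (∀ i j, i ≠ j → ∃ a ∈ f i, ∃ b ∈ f j, G.Adj a b) ∧
    (∀ i, ((f i).card : ℝ) ≤ d)

/-- The Hadwiger number: the largest order of a clique minor. -/
noncomputable def hadwigerNumber {V : Type} (G : SimpleGraph V) : ℕ :=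
  sSup {t : ℕ | HasCliqueMinor G t}

/-- The lexicographic product of two graphs. -/
def lexProd {α β : Type} (G : SimpleGraph α) (H : SimpleGraph β) : SimpleGraph (α × β) where
  Adj x y := G.Adj x.1 y.1 ∨ (x.1 = y.1 ∧ H.Adj x.2 y.2)
  symm := by
    constructor
    intro x y hxy
    rcases hxy with h | ⟨h1, h2⟩
    · exact Or.inl h.symm
    · exact Or.inr ⟨h1.symm, h2.symm⟩
  loopless := by
    constructor
    intro x hx
    rcases hx with h | ⟨_, h2⟩
    · exact G.loopless.irrefl _ h
    · exact H.loopless.irrefl _ h2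

/-- The complete blow-up `G[r] = G · K_r`. -/
def completeBlowup {α : Type} (G : SimpleGraph α) (r : ℕ) : SimpleGraph (α × Fin r) :=
  lexProd G (⊤ : SimpleGraph (Fin r))

/-- The blow-up `G(r) = G · I_r`. -/
def emptyBlowup {α : Type} (G : SimpleGraph α) (r : ℕ) : SimpleGraph (α × Fin r) :=
  lexProd G (⊥ : SimpleGraph (Fin r))

/-- `H` is a minor of `G`: branch sets indexed by the vertices of `H`. -/
def IsMinor {W V : Type} (H : SimpleGraph W) (G : SimpleGraph V) : Prop :=
  ∃ f : W → Finset V,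
    (∀ u, (G.induce ((f u : Set V))).Connected) ∧
    (∀ u u', u ≠ u' → Disjoint (f u) (f u')) ∧
    (∀ u u', H.Adj u u' → ∃ a ∈ f u, ∃ b ∈ f u', G.Adj a b)

/-- The k × k grid graph. -/
def gridGraph (k : ℕ) : SimpleGraph (Fin k × Fin k) where
  Adj a b := (a.1 = b.1 ∧ (a.2.val + 1 = b.2.val ∨ b.2.val + 1 = a.2.val)) ∨
             (a.2 = b.2 ∧ (a.1.val + 1 = b.1.val ∨ b.1.val + 1 = a.1.val))
  symm := by
    constructor
    intro a b hab
    rcases hab with ⟨h1, h2⟩ | ⟨h1, h2⟩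
    · exact Or.inl ⟨h1.symm, h2.symm⟩
    · exact Or.inr ⟨h1.symm, h2.symm⟩
  loopless := by
    constructor
    intro a ha
    rcases ha with ⟨_, h | h⟩ | ⟨_, h | h⟩ <;> omega

/-!
Every strong bramble is a bramble, which gives `h'_f ≤ h_f`. Conversely, in a bramble the
members of size at least two already touch themselves, while the singleton members `{v}` form
a clique. If none of them is an isolated vertex, a permutation `σ` with `v ~ σ v` on that clique
thickens each `{v}` to the edge `{v, σ v}`; this yields a strong bramble, and halving the
weights keeps them valid, since the load at `x` grows at most by the load at `σ⁻¹ x`. If some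
singleton `{v}` is an isolated vertex, every member contains `v`, so the bramble has total
weight at most `1 ≤ h'_f`.
-/

open SimpleGraph

section Brambles

variable {V : Type} {G : SimpleGraph V} {B : Finset (Finset V)}

lemma IsBramble.nonempty (hB : IsBramble G B) {A : Finset V} (hA : A ∈ B) : A.Nonempty := by
  obtain ⟨⟨v, hv⟩⟩ := (hB.1 A hA).nonempty
  exact ⟨v, hv⟩

lemma IsStrongBramble.isBramble (hB : IsStrongBramble G B) : IsBramble G B :=
  ⟨hB.1, fun A hA A' hA' => Or.inr (hB.2 A hA A' hA')⟩

lemma IsBramble.isClique_singletons (hB : IsBramble G B) : G.IsClique {v | {v} ∈ B} := by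
  intro v hv u hu hvu
  rcases hB.2 {v} hv {u} hu with ⟨x, hxv, hxu⟩ | ⟨a, ha, b, hb, hab⟩
  · rw [mem_singleton] at hxv hxu
    exact absurd (hxv.symm.trans hxu) hvu
  · rwa [mem_singleton.mp ha, mem_singleton.mp hb] at hab

end Brambles

section Thickening

variable {V : Type} [DecidableEq V] {G : SimpleGraph V}

lemma SimpleGraph.IsClique.exists_perm_adj {S : Finset V} (hS : G.IsClique (S : Set V))
    (hdeg : ∀ v ∈ S, ¬ G.IsIsolated v) : ∃ σ : Equiv.Perm V, ∀ v ∈ S, G.Adj v (σ v) := by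
  by_cases hcard : 2 ≤ S.card
  · refine ⟨S.toList.formPerm, fun v hv => ?_⟩
    have hv' : v ∈ S.toList := mem_toList.mpr hv
    refine hS hv (mem_toList.mp (List.formPerm_apply_mem_of_mem hv')) ?_
    exact ((List.formPerm_apply_mem_ne_self_iff _ S.nodup_toList v hv').mpr
      (by rwa [length_toList])).symm
  rcases S.eq_empty_or_nonempty with rfl | ⟨v₀, hv₀⟩
  · exact ⟨1, by simp⟩
  obtain ⟨u₀, hu₀⟩ := (exists_adj_iff_not_isIsolated).mpr (hdeg v₀ hv₀)
  refine ⟨Equiv.swap v₀ u₀, fun v hv => ?_⟩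
  obtain rfl : v = v₀ := card_le_one.mp (by omega) v hv v₀ hv₀
  rwa [Equiv.swap_apply_left]

def thicken (σ : Equiv.Perm V) (A : Finset V) : Finset V :=
  if A.card = 1 then A ∪ A.map σ.toEmbedding else A

variable {σ : Equiv.Perm V} {A : Finset V}

lemma subset_thicken : A ⊆ thicken σ A := by
  unfold thicken
  split_ifs
  exacts [subset_union_left, subset_rfl]

lemma thicken_subset : thicken σ A ⊆ A ∪ A.map σ.toEmbedding := by
  unfold thicken
  split_ifs
  exacts [subset_rfl, subset_union_left]

lemma thicken_singleton (v : V) : thicken σ {v} = {v, σ v} := by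
  rw [thicken, if_pos (card_singleton v), map_singleton, ← insert_eq]
  rfl

lemma thicken_of_card_ne_one (hA : A.card ≠ 1) : thicken σ A = A := if_neg hA

lemma exists_adj_mem_thicken (hA : (G.induce (A : Set V)).Connected)
    (hσ : ∀ v, A = {v} → G.Adj v (σ v)) {x : V} (hx : x ∈ A) :
    ∃ y ∈ thicken σ A, G.Adj y x := by
  by_cases hcard : A.card = 1
  · obtain ⟨v, rfl⟩ := card_eq_one.mp hcard
    obtain rfl := mem_singleton.mp hx
    exact ⟨σ x, by simp [thicken_singleton], (hσ x rfl).symm⟩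
  · have : Nontrivial (A : Set V) :=
      (one_lt_card_iff_nontrivial.mp (by have := card_pos.mpr ⟨x, hx⟩; omega)).coe_sort
    obtain ⟨⟨y, hy⟩, hxy⟩ := hA.preconnected.exists_adj_of_nontrivial ⟨x, hx⟩
    exact ⟨y, subset_thicken hy, hxy.symm⟩

lemma IsBramble.isStrongBramble_image_thicken {B : Finset (Finset V)} (hB : IsBramble G B)
    (hσ : ∀ v, {v} ∈ B → G.Adj v (σ v)) : IsStrongBramble G (B.image (thicken σ)) := by
  have hσ' : ∀ A ∈ B, ∀ v, A = {v} → G.Adj v (σ v) := fun A hA v hv => hσ v (hv ▸ hA)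
  constructor
  · simp only [mem_image, forall_exists_index, and_imp, forall_apply_eq_imp_iff₂]
    intro A hA
    by_cases hcard : A.card = 1
    · obtain ⟨v, rfl⟩ := card_eq_one.mp hcard
      rw [thicken_singleton, coe_pair]
      exact induce_pair_connected_of_adj (hσ v hA)
    · rw [thicken_of_card_ne_one hcard]
      exact hB.1 A hA
  · simp only [mem_image, forall_exists_index, and_imp, forall_apply_eq_imp_iff₂]
    intro A hA A' hA'
    rcases hB.2 A hA A' hA' with ⟨x, hxA, hxA'⟩ | ⟨a, ha, b, hb, hab⟩
    · obtain ⟨y, hy, hyx⟩ := exists_adj_mem_thicken (hB.1 A hA) (hσ' A hA) hxA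
      exact ⟨y, hy, x, subset_thicken hxA', hyx⟩
    · exact ⟨a, subset_thicken ha, b, subset_thicken hb, hab⟩

end Thickening

section Weights

variable {V : Type} [DecidableEq V] {B : Finset (Finset V)} {w : Finset V → ℝ}

lemma IsValidWeight.sum_le_card [Fintype V] (hw : IsValidWeight B w)
    (hB : ∀ A ∈ B, A.Nonempty) : ∑ A ∈ B, w A ≤ Fintype.card V :=
  calc ∑ A ∈ B, w A ≤ ∑ A ∈ B, ∑ _v ∈ A, w A := sum_le_sum fun A hA => by
        rw [sum_const, nsmul_eq_mul]
        exact le_mul_of_one_le_left (hw.1 A hA) (by exact_mod_cast (hB A hA).card_pos)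
    _ = ∑ v, ∑ A ∈ B with v ∈ A, w A := sum_comm' (by simp)
    _ ≤ ∑ _v : V, 1 := sum_le_sum fun v _ => hw.2 v
    _ = Fintype.card V := by simp

def pushforwardWeight (B : Finset (Finset V)) (f : Finset V → Finset V) (w : Finset V → ℝ)
    (C : Finset V) : ℝ :=
  ∑ A ∈ B with f A = C, w A

variable {f : Finset V → Finset V}

lemma sum_image_pushforwardWeight :
    ∑ C ∈ B.image f, pushforwardWeight B f w C = ∑ A ∈ B, w A :=
  sum_fiberwise_of_maps_to (fun _ => mem_image_of_mem f) w

lemma sum_filter_pushforwardWeight (x : V) :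
    ∑ C ∈ B.image f with x ∈ C, pushforwardWeight B f w C = ∑ A ∈ B with x ∈ f A, w A := by
  rw [sum_filter, sum_filter,
    ← sum_fiberwise_of_maps_to (s := B) (fun _ => mem_image_of_mem f)]
  refine sum_congr rfl fun C _ => ?_
  rw [pushforwardWeight]
  split_ifs with hC
  · exact sum_congr rfl fun A hA => by rw [(mem_filter.mp hA).2, if_pos hC]
  · exact (sum_eq_zero fun A hA => by rw [(mem_filter.mp hA).2, if_neg hC]).symm

lemma IsValidWeight.half_pushforwardWeight (hw : IsValidWeight B w) (σ : Equiv.Perm V)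
    (hf : ∀ A ∈ B, f A ⊆ A ∪ A.map σ.toEmbedding) :
    IsValidWeight (B.image f) fun C => pushforwardWeight B f w C / 2 := by
  refine ⟨fun C _ => div_nonneg (sum_nonneg fun A hA => hw.1 A (mem_filter.mp hA).1) zero_le_two,
    fun x => ?_⟩
  rw [← sum_div, sum_filter_pushforwardWeight, div_le_one two_pos]
  calc ∑ A ∈ B with x ∈ f A, w A
      ≤ ∑ A ∈ B with x ∈ A, w A + ∑ A ∈ B with σ.symm x ∈ A, w A := by
        simp only [sum_filter, ← sum_add_distrib]
        refine sum_le_sum fun A hA => ?_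
        have hmem : x ∈ f A → x ∈ A ∨ σ.symm x ∈ A := fun hx => by
          simpa [mem_map_equiv] using hf A hA hx
        have := hw.1 A hA
        split_ifs <;> grind
    _ ≤ 1 + 1 := add_le_add (hw.2 x) (hw.2 _)
    _ = 2 := one_add_one_eq_two

end Weights

section HadwigerNumbers

variable {V : Type} [DecidableEq V]

def brambleValues (G : SimpleGraph V) : Set ℝ :=
  {h | ∃ B w, IsBramble G B ∧ IsValidWeight B w ∧ h = ∑ A ∈ B, w A}

def strongBrambleValues (G : SimpleGraph V) : Set ℝ :=
  {h | ∃ B w, IsStrongBramble G B ∧ IsValidWeight B w ∧ h = ∑ A ∈ B, w A}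

variable {G : SimpleGraph V}

lemma strongBrambleValues_subset : strongBrambleValues G ⊆ brambleValues G := by
  rintro h ⟨B, w, hB, hw, rfl⟩
  exact ⟨B, w, hB.isBramble, hw, rfl⟩

lemma zero_mem_strongBrambleValues : (0 : ℝ) ∈ strongBrambleValues G :=
  ⟨∅, 0, ⟨by simp, by simp⟩, ⟨by simp, by simp⟩, by simp⟩

lemma bddAbove_brambleValues [Fintype V] : BddAbove (brambleValues G) :=
  ⟨Fintype.card V, by
    rintro h ⟨B, w, hB, hw, rfl⟩
    exact hw.sum_le_card fun A hA => hB.nonempty hA⟩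

lemma lowerFracHadwiger_le_fracHadwiger [Fintype V] : lowerFracHadwiger G ≤ fracHadwiger G :=
  csSup_le_csSup bddAbove_brambleValues ⟨0, zero_mem_strongBrambleValues⟩
    strongBrambleValues_subset

lemma le_lowerFracHadwiger [Fintype V] {h : ℝ} (hh : h ∈ strongBrambleValues G) :
    h ≤ lowerFracHadwiger G :=
  le_csSup (bddAbove_brambleValues.mono strongBrambleValues_subset) hh

lemma one_le_lowerFracHadwiger [Fintype V] {u v : V} (huv : G.Adj u v) :
    1 ≤ lowerFracHadwiger G := by
  refine le_lowerFracHadwiger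
    ⟨{{u, v}}, fun _ => 1, ⟨?_, ?_⟩, ⟨fun _ _ => zero_le_one, fun x => ?_⟩, by simp⟩
  · intro A hA
    rw [mem_singleton.mp hA, coe_pair]
    exact induce_pair_connected_of_adj huv
  · simp [huv, huv.symm]
  · simpa using card_filter_le {({u, v} : Finset V)} (x ∈ ·)

lemma IsBramble.sum_le_one_of_isIsolated {B : Finset (Finset V)} {w : Finset V → ℝ}
    (hB : IsBramble G B) (hw : IsValidWeight B w) {v : V} (hv : {v} ∈ B)
    (hiso : G.IsIsolated v) : ∑ A ∈ B, w A ≤ 1 := by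
  have hvA : ∀ A ∈ B, v ∈ A := fun A hA => by
    rcases hB.2 A hA {v} hv with ⟨x, hxA, hx⟩ | ⟨a, _, b, hb, hab⟩
    · rwa [← mem_singleton.mp hx]
    · exact absurd ((mem_singleton.mp hb) ▸ hab).symm (hiso a)
  simpa [filter_true_of_mem hvA] using hw.2 v

lemma IsBramble.half_mem_strongBrambleValues [Fintype V] {B : Finset (Finset V)}
    {w : Finset V → ℝ} (hB : IsBramble G B) (hw : IsValidWeight B w)
    (hdeg : ∀ v, {v} ∈ B → ¬ G.IsIsolated v) :
    (∑ A ∈ B, w A) / 2 ∈ strongBrambleValues G := by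
  obtain ⟨σ, hσ⟩ := IsClique.exists_perm_adj (S := {v | {v} ∈ B}.toFinset)
    (hB.isClique_singletons.subset (by simp)) (by simpa using hdeg)
  refine ⟨B.image (thicken σ), fun C => pushforwardWeight B (thicken σ) w C / 2,
    hB.isStrongBramble_image_thicken (by simpa using hσ),
    hw.half_pushforwardWeight σ fun A _ => thicken_subset, ?_⟩
  rw [← sum_div, sum_image_pushforwardWeight]

lemma fracHadwiger_le_two_mul_lowerFracHadwiger [Fintype V] {u v : V} (huv : G.Adj u v) :
    fracHadwiger G ≤ 2 * lowerFracHadwiger G := by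
  have hone := one_le_lowerFracHadwiger huv
  refine csSup_le ⟨0, strongBrambleValues_subset zero_mem_strongBrambleValues⟩ ?_
  rintro _ ⟨B, w, hB, hw, rfl⟩
  by_cases hiso : ∃ v, {v} ∈ B ∧ G.IsIsolated v
  · obtain ⟨v, hv, hiso⟩ := hiso
    linarith [hB.sum_le_one_of_isIsolated hw hv hiso]
  · push Not at hiso
    linarith [le_lowerFracHadwiger (hB.half_mem_strongBrambleValues hw hiso)]

end HadwigerNumbers

/-- if `G` has an edge then `h_f(G)/2 ≤ h'_f(G) ≤ h_f(G)`. -/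
theorem lowerFracHadwiger_bounds
    {V : Type} [Fintype V] [DecidableEq V] (G : SimpleGraph V)
    (he : ∃ u v : V, G.Adj u v) :
    fracHadwiger G / 2 ≤ lowerFracHadwiger G ∧ lowerFracHadwiger G ≤ fracHadwiger G := by
  obtain ⟨u, v, huv⟩ := he
  exact ⟨by linarith [fracHadwiger_le_two_mul_lowerFracHadwiger huv],
    lowerFracHadwiger_le_fracHadwiger⟩
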